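/- arXiv:1805.02773 — 8 statements merged into one kernel-verified Lean document; each statement's English description precedes it below -/
import Mathlib

section
/- For all vectors v₁, v₂, v₃ in ℝ³, one has |det A|^{4/3} ≤ (1/3)·(‖v₁ × v₂‖² + ‖v₂ × v₃‖² + ‖v₃ × v₁‖²), where A is the 3×3 matrix whose rows are v₁, v₂, v₃, × denotes the cross product on ℝ³, and ‖·‖ the Euclidean norm. -/
/-- Lagrange: `‖u × w‖² ≤ ‖u‖²‖w‖²`. -/
lemma lag3 (a1 a2 a3 b1 b2 b3 : ℝ) :
    (a2*b3-a3*b2)^2+(a3*b1-a1*b3)^2+(a1*b2-a2*b1)^2 ≤ (a1^2+a2^2+a3^2)*(b1^2+b2^2+b3^2) := by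
  nlinarith [sq_nonneg (a1*b1+a2*b2+a3*b3)]

/-- Cauchy–Schwarz in ℝ³. -/
lemma cs3 (a1 a2 a3 b1 b2 b3 : ℝ) :
    (a1*b1+a2*b2+a3*b3)^2 ≤ (a1^2+a2^2+a3^2)*(b1^2+b2^2+b3^2) := by
  nlinarith [sq_nonneg (a2*b3-a3*b2), sq_nonneg (a3*b1-a1*b3), sq_nonneg (a1*b2-a2*b1)]

/-- AM–GM for three nonnegative reals. -/
lemma amgm3 (a b c : ℝ) (ha : 0 ≤ a) (hb : 0 ≤ b) (hc : 0 ≤ c) :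
    a * b * c ≤ ((a + b + c)/3)^3 := by
  nlinarith [mul_nonneg ha (sq_nonneg (b-c)), mul_nonneg hb (sq_nonneg (c-a)),
    mul_nonneg hc (sq_nonneg (a-b)), sq_nonneg (a-b), sq_nonneg (b-c), sq_nonneg (c-a)]

lemma keylem (D a b c n1 n2 n3 : ℝ) (ha : 0 ≤ a) (hb : 0 ≤ b) (hc : 0 ≤ c)
    (hn1 : 0 ≤ n1) (hn2 : 0 ≤ n2) (hn3 : 0 ≤ n3)
    (h1 : D^2*n1 ≤ a*c) (h2 : D^2*n2 ≤ a*b) (h3 : D^2*n3 ≤ b*c)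
    (h4 : D^2 ≤ n1*n2*n3) : D^4 ≤ a*b*c := by
  have habc : 0 ≤ a*b*c := by positivity
  have h8 : (D^4)^2 ≤ (a*b*c)^2 := by
    have e2 : (0:ℝ) ≤ D^2*n2 := by positivity
    have e3 : (0:ℝ) ≤ D^2*n3 := by positivity
    have m1 : (D^2*n1)*(D^2*n2) ≤ (a*c)*(a*b) :=
      mul_le_mul h1 h2 e2 (by positivity)
    have m2 : ((D^2*n1)*(D^2*n2))*(D^2*n3) ≤ ((a*c)*(a*b))*(b*c) :=
      mul_le_mul m1 h3 e3 (by positivity)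
    have h6 : D^6*(n1*n2*n3) ≤ (a*b*c)^2 := by nlinarith [m2]
    have h7 : D^8 ≤ D^6*(n1*n2*n3) := by nlinarith [pow_nonneg (sq_nonneg D) 3, h4]
    nlinarith [h6, h7]
  exact le_of_pow_le_pow_left₀ (by norm_num) habc h8

/-- The core component-level inequality: `det⁴ ≤ ((A+B+C)/3)³`. -/
lemma poly_key (x0 x1 x2 y0 y1 y2 z0 z1 z2 : ℝ) :
    (x0*(y1*z2-y2*z1) - x1*(y0*z2-y2*z0) + x2*(y0*z1-y1*z0))^4 ≤
      (((x1*y2-x2*y1)^2+(x2*y0-x0*y2)^2+(x0*y1-x1*y0)^2 +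
        ((y1*z2-y2*z1)^2+(y2*z0-y0*z2)^2+(y0*z1-y1*z0)^2) +
        ((z1*x2-z2*x1)^2+(z2*x0-z0*x2)^2+(z0*x1-z1*x0)^2))/3)^3 := by
  set D := x0*(y1*z2-y2*z1) - x1*(y0*z2-y2*z0) + x2*(y0*z1-y1*z0) with hD
  set A := (x1*y2-x2*y1)^2+(x2*y0-x0*y2)^2+(x0*y1-x1*y0)^2 with hA
  set B := (y1*z2-y2*z1)^2+(y2*z0-y0*z2)^2+(y0*z1-y1*z0)^2 with hB
  set C := (z1*x2-z2*x1)^2+(z2*x0-z0*x2)^2+(z0*x1-z1*x0)^2 with hC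
  set N1 := x0^2+x1^2+x2^2 with hN1
  set N2 := y0^2+y1^2+y2^2 with hN2
  set N3 := z0^2+z1^2+z2^2 with hN3
  have hA0 : 0 ≤ A := by rw [hA]; positivity
  have hB0 : 0 ≤ B := by rw [hB]; positivity
  have hC0 : 0 ≤ C := by rw [hC]; positivity
  have hN10 : 0 ≤ N1 := by rw [hN1]; positivity
  have hN20 : 0 ≤ N2 := by rw [hN2]; positivity
  have hN30 : 0 ≤ N3 := by rw [hN3]; positivity
  -- (v₁×v₂) × (v₃×v₁) = -D v₁
  have h1 : D^2*N1 ≤ A*C := by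
    have L := lag3 (x1*y2-x2*y1) (x2*y0-x0*y2) (x0*y1-x1*y0)
      (z1*x2-z2*x1) (z2*x0-z0*x2) (z0*x1-z1*x0)
    have e : D^2*N1 = ((x2*y0-x0*y2)*(z0*x1-z1*x0)-(x0*y1-x1*y0)*(z2*x0-z0*x2))^2
        + ((x0*y1-x1*y0)*(z1*x2-z2*x1)-(x1*y2-x2*y1)*(z0*x1-z1*x0))^2
        + ((x1*y2-x2*y1)*(z2*x0-z0*x2)-(x2*y0-x0*y2)*(z1*x2-z2*x1))^2 := by
      rw [hD, hN1]; ring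
    have e2 : A*C = ((x1*y2-x2*y1)^2+(x2*y0-x0*y2)^2+(x0*y1-x1*y0)^2)
        * ((z1*x2-z2*x1)^2+(z2*x0-z0*x2)^2+(z0*x1-z1*x0)^2) := by rw [hA, hC]
    linarith [L, e.ge, e2.le]
  -- (v₁×v₂) × (v₂×v₃) = D v₂
  have h2 : D^2*N2 ≤ A*B := by
    have L := lag3 (x1*y2-x2*y1) (x2*y0-x0*y2) (x0*y1-x1*y0)
      (y1*z2-y2*z1) (y2*z0-y0*z2) (y0*z1-y1*z0)
    have e : D^2*N2 = ((x2*y0-x0*y2)*(y0*z1-y1*z0)-(x0*y1-x1*y0)*(y2*z0-y0*z2))^2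
        + ((x0*y1-x1*y0)*(y1*z2-y2*z1)-(x1*y2-x2*y1)*(y0*z1-y1*z0))^2
        + ((x1*y2-x2*y1)*(y2*z0-y0*z2)-(x2*y0-x0*y2)*(y1*z2-y2*z1))^2 := by
      rw [hD, hN2]; ring
    have e2 : A*B = ((x1*y2-x2*y1)^2+(x2*y0-x0*y2)^2+(x0*y1-x1*y0)^2)
        * ((y1*z2-y2*z1)^2+(y2*z0-y0*z2)^2+(y0*z1-y1*z0)^2) := by rw [hA, hB]
    linarith [L, e.ge, e2.le]
  -- (v₂×v₃) × (v₃×v₁) = D v₃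
  have h3 : D^2*N3 ≤ B*C := by
    have L := lag3 (y1*z2-y2*z1) (y2*z0-y0*z2) (y0*z1-y1*z0)
      (z1*x2-z2*x1) (z2*x0-z0*x2) (z0*x1-z1*x0)
    have e : D^2*N3 = ((y2*z0-y0*z2)*(z0*x1-z1*x0)-(y0*z1-y1*z0)*(z2*x0-z0*x2))^2
        + ((y0*z1-y1*z0)*(z1*x2-z2*x1)-(y1*z2-y2*z1)*(z0*x1-z1*x0))^2
        + ((y1*z2-y2*z1)*(z2*x0-z0*x2)-(y2*z0-y0*z2)*(z1*x2-z2*x1))^2 := by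
      rw [hD, hN3]; ring
    have e2 : B*C = ((y1*z2-y2*z1)^2+(y2*z0-y0*z2)^2+(y0*z1-y1*z0)^2)
        * ((z1*x2-z2*x1)^2+(z2*x0-z0*x2)^2+(z0*x1-z1*x0)^2) := by rw [hB, hC]
    linarith [L, e.ge, e2.le]
  -- Hadamard: D² ≤ N1·N2·N3
  have h4 : D^2 ≤ N1*N2*N3 := by
    have L := cs3 x0 x1 x2 (y1*z2-y2*z1) (y2*z0-y0*z2) (y0*z1-y1*z0)
    have e : D^2 = (x0*(y1*z2-y2*z1)+x1*(y2*z0-y0*z2)+x2*(y0*z1-y1*z0))^2 := by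
      rw [hD]; ring
    have hNB : D^2 ≤ N1*B := by rw [e, hN1, hB]; exact L
    have hBle : B ≤ N2*N3 := by
      have L2 := lag3 y0 y1 y2 z0 z1 z2
      rw [hB, hN2, hN3]; exact L2
    calc D^2 ≤ N1*B := hNB
      _ ≤ N1*(N2*N3) := mul_le_mul_of_nonneg_left hBle hN10
      _ = N1*N2*N3 := by ring
  have h5 : D^4 ≤ A*B*C := keylem D A B C N1 N2 N3 hA0 hB0 hC0 hN10 hN20 hN30 h1 h2 h3 h4
  calc D^4 ≤ A*B*C := h5
    _ ≤ ((A+B+C)/3)^3 := amgm3 A B C hA0 hB0 hC0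

lemma rpow_step (D S : ℝ) (hS : 0 ≤ S) (h : D^4 ≤ S^3) : |D| ^ ((4:ℝ)/3) ≤ S := by
  have hD : (0:ℝ) ≤ |D| := abs_nonneg D
  have h1 : |D| ^ ((4:ℝ)/3) = (D^4) ^ ((1:ℝ)/3) := by
    rw [show ((4:ℝ)/3) = ((4:ℕ):ℝ)*(1/3) by norm_num, Real.rpow_mul hD,
      Real.rpow_natCast, pow_abs, abs_of_nonneg (by positivity : (0:ℝ) ≤ D^4)]
  rw [h1]
  calc (D^4)^((1:ℝ)/3) ≤ (S^3)^((1:ℝ)/3) :=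
        Real.rpow_le_rpow (by positivity) h (by norm_num)
    _ = S := by
        rw [← Real.rpow_natCast S 3, ← Real.rpow_mul hS]; norm_num

/-- For vectors `v₁ v₂ v₃` in ℝ³,
`|det A|^{4/3} ≤ (1/3)·(‖v₁ × v₂‖² + ‖v₂ × v₃‖² + ‖v₃ × v₁‖²)`,
where `A` has rows `v₁, v₂, v₃` and the squared Euclidean norm of a vector is
the sum of the squares of its components. -/
theorem stmt_2 (v₁ v₂ v₃ : Fin 3 → ℝ) :
    |(Matrix.of ![v₁, v₂, v₃]).det| ^ ((4 : ℝ) / 3) ≤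
      (1 / 3) * ((∑ i, (crossProduct v₁ v₂) i ^ 2) + (∑ i, (crossProduct v₂ v₃) i ^ 2) +
        (∑ i, (crossProduct v₃ v₁) i ^ 2)) := by
  have eA : ∑ i, (crossProduct v₁ v₂) i ^ 2 =
      (v₁ 1 * v₂ 2 - v₁ 2 * v₂ 1)^2 + (v₁ 2 * v₂ 0 - v₁ 0 * v₂ 2)^2
        + (v₁ 0 * v₂ 1 - v₁ 1 * v₂ 0)^2 := by
    simp [crossProduct, Fin.sum_univ_three]
  have eB : ∑ i, (crossProduct v₂ v₃) i ^ 2 =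
      (v₂ 1 * v₃ 2 - v₂ 2 * v₃ 1)^2 + (v₂ 2 * v₃ 0 - v₂ 0 * v₃ 2)^2
        + (v₂ 0 * v₃ 1 - v₂ 1 * v₃ 0)^2 := by
    simp [crossProduct, Fin.sum_univ_three]
  have eC : ∑ i, (crossProduct v₃ v₁) i ^ 2 =
      (v₃ 1 * v₁ 2 - v₃ 2 * v₁ 1)^2 + (v₃ 2 * v₁ 0 - v₃ 0 * v₁ 2)^2
        + (v₃ 0 * v₁ 1 - v₃ 1 * v₁ 0)^2 := by
    simp [crossProduct, Fin.sum_univ_three]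
  have eD : (Matrix.of ![v₁, v₂, v₃]).det =
      v₁ 0*(v₂ 1*v₃ 2 - v₂ 2*v₃ 1) - v₁ 1*(v₂ 0*v₃ 2 - v₂ 2*v₃ 0)
        + v₁ 2*(v₂ 0*v₃ 1 - v₂ 1*v₃ 0) := by
    rw [Matrix.det_fin_three]; simp [Matrix.of_apply]; ring
  have key := poly_key (v₁ 0) (v₁ 1) (v₁ 2) (v₂ 0) (v₂ 1) (v₂ 2) (v₃ 0) (v₃ 1) (v₃ 2)
  refine rpow_step _ _ (by positivity) ?_
  have hthird : (1/3 : ℝ) * ((∑ i, (crossProduct v₁ v₂) i ^ 2) +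
      (∑ i, (crossProduct v₂ v₃) i ^ 2) + (∑ i, (crossProduct v₃ v₁) i ^ 2)) =
      ((∑ i, (crossProduct v₁ v₂) i ^ 2) + (∑ i, (crossProduct v₂ v₃) i ^ 2) +
        (∑ i, (crossProduct v₃ v₁) i ^ 2)) / 3 := by ring
  rw [hthird, eA, eB, eC, eD]
  exact key
end

section
/- Let 0 < a ≤ b be real numbers and let u : ℝ → ℝ be continuously differentiable on [a, b]. Then u(b)²/b + (1/2)·∫ₐᵇ u(s)²/s² ds ≤ u(a)²/a + 2·∫ₐᵇ u'(s)² ds. -/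
/-! The derivative of `u(s)²/s` is `2 u u'/s - u²/s²`, so integrating it over `[a, b]` gives
`u(b)²/b - u(a)²/a`. Adding `½ u²/s²` to this derivative leaves
`2 (u/s) u' - ½ (u/s)² ≤ 2 u'²`, which is `½ (u/s - 2u')² ≥ 0`. -/

open Set MeasureTheory intervalIntegral

lemma hasDerivAt_sq_div_id {u : ℝ → ℝ} {v x : ℝ} (hu : HasDerivAt u v x) (hx : x ≠ 0) :
    HasDerivAt (fun s => u s ^ 2 / s) (2 * u x * v / x - u x ^ 2 / x ^ 2) x := by
  refine ((hu.fun_pow 2).fun_div (hasDerivAt_id' x) hx).congr_deriv ?_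
  push_cast
  field_simp

lemma two_mul_div_sub_sq_div_add_half_le (p q s : ℝ) :
    2 * p * q / s - p ^ 2 / s ^ 2 + 1 / 2 * (p ^ 2 / s ^ 2) ≤ 2 * q ^ 2 := by
  have hrewrite : 2 * p * q / s - p ^ 2 / s ^ 2 + 1 / 2 * (p ^ 2 / s ^ 2)
      = 2 * (p / s) * q - 1 / 2 * (p / s) ^ 2 := by ring
  rw [hrewrite]
  nlinarith [sq_nonneg (p / s - 2 * q)]

lemma integral_two_mul_div_sub_sq_div {a b : ℝ} {u u' : ℝ → ℝ} (ha : 0 < a) (hab : a ≤ b)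
    (hderiv : ∀ s ∈ Icc a b, HasDerivWithinAt u (u' s) (Icc a b) s)
    (hint : IntervalIntegrable (fun s => 2 * u s * u' s / s - u s ^ 2 / s ^ 2) volume a b) :
    ∫ s in a..b, (2 * u s * u' s / s - u s ^ 2 / s ^ 2) = u b ^ 2 / b - u a ^ 2 / a := by
  have hne : ∀ s ∈ Icc a b, s ≠ 0 := fun s hs => (ha.trans_le hs.1).ne'
  refine integral_eq_sub_of_hasDerivAt_of_le (f := fun s => u s ^ 2 / s) hab ?_
    (fun x hx => ?_) hint
  · exact (HasDerivWithinAt.continuousOn hderiv |>.pow 2).div continuousOn_id hne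
  · exact hasDerivAt_sq_div_id ((hderiv x (Ioo_subset_Icc_self hx)).hasDerivAt
      (Icc_mem_nhds hx.1 hx.2)) (hne x (Ioo_subset_Icc_self hx))

/-- Hardy-type inequality: for `0 < a ≤ b` and `u` continuously
differentiable on `[a,b]`,
`u(b)²/b + (1/2)·∫ₐᵇ u(s)²/s² ds ≤ u(a)²/a + 2·∫ₐᵇ u'(s)² ds`. -/
theorem stmt_3 (a b : ℝ) (ha : 0 < a) (hab : a ≤ b) (u u' : ℝ → ℝ)
    (hderiv : ∀ s ∈ Set.Icc a b, HasDerivWithinAt u (u' s) (Set.Icc a b) s)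
    (hcont : ContinuousOn u' (Set.Icc a b)) :
    u b ^ 2 / b + (1 / 2) * ∫ s in a..b, u s ^ 2 / s ^ 2 ≤
      u a ^ 2 / a + 2 * ∫ s in a..b, u' s ^ 2 := by
  have hne : ∀ s ∈ uIcc a b, s ≠ 0 := fun s hs => (ha.trans_le (uIcc_of_le hab ▸ hs).1).ne'
  have hu : ContinuousOn u (uIcc a b) :=
    uIcc_of_le hab ▸ HasDerivWithinAt.continuousOn hderiv
  have hcont' : ContinuousOn u' (uIcc a b) := uIcc_of_le hab ▸ hcont
  have hsq_div : IntervalIntegrable (fun s => u s ^ 2 / s ^ 2) volume a b :=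
    ((hu.pow 2).div (continuousOn_id.pow 2) fun s hs => pow_ne_zero 2 (hne s hs)).intervalIntegrable
  have hderiv_int : IntervalIntegrable (fun s => 2 * u s * u' s / s - u s ^ 2 / s ^ 2) volume a b :=
    (((continuousOn_const.mul hu).mul hcont').div continuousOn_id hne).intervalIntegrable.sub
      hsq_div
  have hsq_deriv : IntervalIntegrable (fun s => u' s ^ 2) volume a b :=
    (hcont'.pow 2).intervalIntegrable
  have hmono := integral_mono hab (hderiv_int.add (hsq_div.const_mul (1 / 2)))
    (hsq_deriv.const_mul 2) fun s => two_mul_div_sub_sq_div_add_half_le (u s) (u' s) s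
  rw [integral_add hderiv_int (hsq_div.const_mul _), intervalIntegral.integral_const_mul,
    intervalIntegral.integral_const_mul,
    integral_two_mul_div_sub_sq_div ha hab hderiv hderiv_int] at hmono
  linarith
end

section
/- Let t > 0 and let N be a real-valued differentiable function on [t, S], where t ≤ S ≤ ((2 + 2·N(t))/(1 + 2·N(t)))^{1/2}·t. Assume N(x) > 0 for all x ∈ [t, S] and that N'(x) ≤ 2·(N(x) + N(x)²)/x for all x ∈ [t, S]. Then N(s) ≤ 2·N(t) for every s ∈ [t, S]. -/
/-!
The inequality `N' ≤ 2(N + N²)/x` says exactly that `N / ((1 + N) x²)` is nonincreasing, its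
derivative being `(N' x - 2N(1 + N)) / ((1 + N)² x³)`. Comparing its values at `t` and `s` gives
`N(s)/(1 + N(s)) ≤ N(t)/(1 + N(t)) · (s/t)² ≤ 2N(t)/(1 + 2N(t))` by the bound on `S`, and
`x ↦ x/(1 + x)` is increasing.
-/

open Set

theorem antitoneOn_div_one_add_div_sq {N N' : ℝ → ℝ} {a b : ℝ} (ha : 0 < a)
    (hN : ∀ x ∈ Icc a b, HasDerivWithinAt N (N' x) (Icc a b) x)
    (hN₁ : ∀ x ∈ Icc a b, 1 + N x ≠ 0)
    (hN' : ∀ x ∈ Icc a b, N' x ≤ 2 * (N x + N x ^ 2) / x) :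
    AntitoneOn (fun x => N x / (1 + N x) / x ^ 2) (Icc a b) := by
  have hderiv : ∀ x ∈ Icc a b, HasDerivWithinAt (fun x => N x / (1 + N x) / x ^ 2)
      ((N' x * x - 2 * (N x + N x ^ 2)) / ((1 + N x) ^ 2 * x ^ 3)) (Icc a b) x := by
    intro x hx
    have hx₀ : x ≠ 0 := (ha.trans_le hx.1).ne'
    refine (((hN x hx).fun_div ((hN x hx).const_add 1) (hN₁ x hx)).fun_div
      (hasDerivWithinAt_pow 2 x) (pow_ne_zero 2 hx₀)).congr_deriv ?_
    field_simp
    ring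
  refine antitoneOn_of_hasDerivWithinAt_nonpos (convex_Icc a b)
    (fun x hx => (hderiv x hx).continuousWithinAt)
    (fun x hx => (hderiv x (interior_subset hx)).mono interior_subset) fun x hx => ?_
  have hx := interior_subset hx
  have hx₀ : 0 < x := ha.trans_le hx.1
  have hle : N' x * x ≤ 2 * (N x + N x ^ 2) := (le_div_iff₀ hx₀).1 (hN' x hx)
  exact div_nonpos_of_nonpos_of_nonneg (sub_nonpos.2 hle) (by positivity)

theorem le_of_div_one_add_le_div_one_add {a b : ℝ} (ha : 0 < 1 + a) (hb : 0 < 1 + b)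
    (h : a / (1 + a) ≤ b / (1 + b)) : a ≤ b := by
  rw [div_le_div_iff₀ ha hb] at h
  linarith

/-- If `N > 0` is differentiable on `[t,S]` with
`N' ≤ 2(N+N²)/x` and `S ≤ ((2+2N(t))/(1+2N(t)))^{1/2}·t`, then `N(s) ≤ 2N(t)` on `[t,S]`. -/
theorem stmt_4 (t S : ℝ) (ht : 0 < t) (N N' : ℝ → ℝ)
    (hS : t ≤ S) (hS' : S ≤ Real.sqrt ((2 + 2 * N t) / (1 + 2 * N t)) * t)
    (hderiv : ∀ x ∈ Set.Icc t S, HasDerivWithinAt N (N' x) (Set.Icc t S) x)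
    (hpos : ∀ x ∈ Set.Icc t S, 0 < N x)
    (hineq : ∀ x ∈ Set.Icc t S, N' x ≤ 2 * (N x + N x ^ 2) / x) :
    ∀ s ∈ Set.Icc t S, N s ≤ 2 * N t := by
  intro s hs
  have ht' : t ∈ Icc t S := ⟨le_rfl, hS⟩
  have hNt := hpos t ht'
  have hNs := hpos s hs
  have hs₀ : 0 < s := ht.trans_le hs.1
  have hmono : N s / (1 + N s) / s ^ 2 ≤ N t / (1 + N t) / t ^ 2 :=
    antitoneOn_div_one_add_div_sq ht hderiv (fun x hx => by linarith [hpos x hx]) hineq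
      ht' hs hs.1
  have hst : s ^ 2 ≤ (2 + 2 * N t) / (1 + 2 * N t) * t ^ 2 := by
    calc s ^ 2 ≤ (Real.sqrt ((2 + 2 * N t) / (1 + 2 * N t)) * t) ^ 2 := by
          gcongr; exact hs.2.trans hS'
      _ = _ := by rw [mul_pow, Real.sq_sqrt (by positivity)]
  refine le_of_div_one_add_le_div_one_add (by linarith) (by linarith) ?_
  calc N s / (1 + N s) ≤ N t / (1 + N t) / t ^ 2 * s ^ 2 := by
        rwa [← div_le_iff₀ (by positivity)]
    _ ≤ N t / (1 + N t) / t ^ 2 * ((2 + 2 * N t) / (1 + 2 * N t) * t ^ 2) := by gcongr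
    _ = 2 * N t / (1 + 2 * N t) := by field_simp
end

section
/- Let 0 < t₀ ≤ t₁ and C ≥ 0, and let N be a real-valued differentiable function on [t₀, t₁] with N'(s) ≤ N(s)·(1 − N(s))/s + C·s for all s ∈ [t₀, t₁]. Then for every u ∈ [t₀, t₁], N(u) ≤ 1 + C·u·(u − t₀) + (N(t₀) − 1)·t₀/u. -/
/-!
The quantity `v(s) = (N(s) - 1) s` satisfies
`v' = s N' + N - 1 ≤ N (1 - N) + C s² + N - 1 = -(N - 1)² + C s² ≤ C s²`.
On `[t₀, u]` this gives `v' ≤ C u²`, so by the mean value inequality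
`(N(u) - 1) u - (N(t₀) - 1) t₀ ≤ C u² (u - t₀)`; dividing by `u` is the claim.
-/

open Set

theorem Convex.image_sub_le_mul_sub_of_hasDerivWithinAt_le {D : Set ℝ} (hD : Convex ℝ D)
    {f f' : ℝ → ℝ} {M : ℝ} (hf : ∀ x ∈ D, HasDerivWithinAt f (f' x) D x)
    (hf' : ∀ x ∈ interior D, f' x ≤ M) {x y : ℝ} (hx : x ∈ D) (hy : y ∈ D) (hxy : x ≤ y) :
    f y - f x ≤ M * (y - x) := by
  have hg : ∀ z ∈ D, HasDerivWithinAt (fun z => f z - M * z) (f' z - M) D z := fun z hz =>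
    by simpa using (hf z hz).fun_sub ((hasDerivWithinAt_id z D).const_mul M)
  have hanti : AntitoneOn (fun z => f z - M * z) D :=
    antitoneOn_of_hasDerivWithinAt_nonpos hD (fun z hz => (hg z hz).continuousWithinAt)
      (fun z hz => (hg z (interior_subset hz)).mono interior_subset)
      (fun z hz => sub_nonpos.2 (hf' z hz))
  linarith [hanti hx hy hxy]

theorem sub_one_mul_deriv_le_of_le {n n' C s : ℝ} (hs : 0 < s)
    (h : n' ≤ n * (1 - n) / s + C * s) : n' * s + (n - 1) ≤ -(n - 1) ^ 2 + C * s ^ 2 := by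
  have hmul : n' * s ≤ n * (1 - n) + C * s * s := by
    simpa [add_mul, div_mul_cancel₀ _ hs.ne'] using mul_le_mul_of_nonneg_right h hs.le
  linear_combination hmul

theorem stmt_5_general (t₀ t₁ C : ℝ) (ht₀ : 0 < t₀) (hC : 0 ≤ C) (N N' : ℝ → ℝ)
    (hderiv : ∀ s ∈ Set.Icc t₀ t₁, HasDerivWithinAt N (N' s) (Set.Icc t₀ t₁) s)
    (hineq : ∀ s ∈ Set.Icc t₀ t₁, N' s ≤ N s * (1 - N s) / s + C * s) :
    ∀ u ∈ Set.Icc t₀ t₁, N u ≤ 1 + C * u * (u - t₀) + (N t₀ - 1) * t₀ / u := by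
  intro u hu
  have hu₀ : 0 < u := ht₀.trans_le hu.1
  have hsub : Icc t₀ u ⊆ Icc t₀ t₁ := Icc_subset_Icc_right hu.2
  have hv : ∀ s ∈ Icc t₀ u, HasDerivWithinAt (fun s => (N s - 1) * s)
      (N' s * s + (N s - 1) * 1) (Icc t₀ u) s := fun s hs =>
    (((hderiv s (hsub hs)).mono hsub).sub_const 1).mul (hasDerivWithinAt_id s _)
  have hv' : ∀ s ∈ interior (Icc t₀ u), N' s * s + (N s - 1) * 1 ≤ C * u ^ 2 := by
    rw [interior_Icc]
    intro s hs
    have hs₀ : 0 < s := ht₀.trans hs.1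
    calc N' s * s + (N s - 1) * 1 ≤ -(N s - 1) ^ 2 + C * s ^ 2 := by
          simpa using sub_one_mul_deriv_le_of_le hs₀ (hineq s (hsub (Ioo_subset_Icc_self hs)))
      _ ≤ C * u ^ 2 := by
          have : s ^ 2 ≤ u ^ 2 := pow_le_pow_left₀ hs₀.le hs.2.le 2
          nlinarith [sq_nonneg (N s - 1)]
  have hmvt : (N u - 1) * u - (N t₀ - 1) * t₀ ≤ C * u ^ 2 * (u - t₀) :=
    (convex_Icc t₀ u).image_sub_le_mul_sub_of_hasDerivWithinAt_le hv hv'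
      (left_mem_Icc.2 hu.1) (right_mem_Icc.2 hu.1) hu.1
  have hdiv : N u - 1 ≤ (C * u ^ 2 * (u - t₀) + (N t₀ - 1) * t₀) / u := by
    rw [le_div_iff₀ hu₀]; linarith
  rw [add_div, show C * u ^ 2 * (u - t₀) / u = C * u * (u - t₀) by field_simp] at hdiv
  linarith

/-- If `N' ≤ N(1−N)/s + C·s` on `[t₀,t₁]` with `0 < t₀ ≤ t₁`, `C ≥ 0`,
then `N(u) ≤ 1 + C·u·(u − t₀) + (N(t₀) − 1)·t₀/u` for all `u ∈ [t₀,t₁]`. -/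
theorem stmt_5 (t₀ t₁ C : ℝ) (ht₀ : 0 < t₀) (ht : t₀ ≤ t₁) (hC : 0 ≤ C) (N N' : ℝ → ℝ)
    (hderiv : ∀ s ∈ Set.Icc t₀ t₁, HasDerivWithinAt N (N' s) (Set.Icc t₀ t₁) s)
    (hineq : ∀ s ∈ Set.Icc t₀ t₁, N' s ≤ N s * (1 - N s) / s + C * s) :
    ∀ u ∈ Set.Icc t₀ t₁, N u ≤ 1 + C * u * (u - t₀) + (N t₀ - 1) * t₀ / u :=
  stmt_5_general t₀ t₁ C ht₀ hC N N' hderiv hineq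
end

section
/- Let 0 < a < b and K > 0 be real numbers and let f be a differentiable real-valued function on [a, b] with f(s) > 0 for all s ∈ [a, b] and f'(s) ≥ K·s^{−1/3}·f(s)^{4/3} for all s ∈ [a, b]. Then f(a) ≤ 8·K^{−3}·(b^{2/3} − a^{2/3})^{−3}. -/
/-!
If `f' ≥ h · f^{1+q}` with `f > 0` and `H' = h`, then `-f^{-q} - q H` is nondecreasing, because its
derivative is `q (f' f^{-q-1} - h) ≥ 0`. With `q = 1/3`, `h = K s^{-1/3}`, `H = (3K/2) s^{2/3}` this
gives `(K/2)(b^{2/3} - a^{2/3}) ≤ f(a)^{-1/3}`, and cubing the reciprocal is the claimed bound.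
-/

open Set

theorem mul_sub_le_rpow_neg_sub_of_mul_rpow_le_deriv {a b q : ℝ} {f f' h H : ℝ → ℝ}
    (hab : a ≤ b) (hq : 0 < q)
    (hf : ∀ s ∈ Icc a b, HasDerivWithinAt f (f' s) (Icc a b) s)
    (hH : ∀ s ∈ Icc a b, HasDerivWithinAt H (h s) (Icc a b) s)
    (hpos : ∀ s ∈ Icc a b, 0 < f s)
    (hineq : ∀ s ∈ Icc a b, h s * f s ^ (1 + q) ≤ f' s) :
    q * (H b - H a) ≤ f a ^ (-q) - f b ^ (-q) := by
  set G : ℝ → ℝ := fun s => -f s ^ (-q) - q * H s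
  have hG : ∀ s ∈ Icc a b,
      HasDerivWithinAt G (q * (f' s * f s ^ (-q - 1) - h s)) (Icc a b) s := by
    intro s hs
    refine (((hf s hs).rpow_const (p := -q) (Or.inl (hpos s hs).ne')).neg.sub
      ((hH s hs).const_mul q)).congr_deriv ?_
    ring
  have hG_nonneg : ∀ s ∈ Icc a b, 0 ≤ q * (f' s * f s ^ (-q - 1) - h s) := by
    intro s hs
    have hfs := hpos s hs
    have hcancel : f s ^ (1 + q) * f s ^ (-q - 1) = 1 := by
      rw [← Real.rpow_add hfs, show 1 + q + (-q - 1) = 0 by ring, Real.rpow_zero]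
    have hle : h s ≤ f' s * f s ^ (-q - 1) := by
      calc h s = h s * f s ^ (1 + q) * f s ^ (-q - 1) := by rw [mul_assoc, hcancel, mul_one]
        _ ≤ f' s * f s ^ (-q - 1) := by gcongr; exact hineq s hs
    exact mul_nonneg hq.le (sub_nonneg.2 hle)
  have hmono : MonotoneOn G (Icc a b) :=
    monotoneOn_of_hasDerivWithinAt_nonneg (convex_Icc a b)
      (fun s hs => (hG s hs).continuousWithinAt)
      (fun s hs => (hG s (interior_subset hs)).mono interior_subset)
      (fun s hs => hG_nonneg s (interior_subset hs))
  have hGab := hmono (left_mem_Icc.2 hab) (right_mem_Icc.2 hab) hab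
  simp only [G] at hGab
  linarith

/-- A positive differentiable `f` on `[a,b]` with
`f' ≥ K·s^{−1/3}·f^{4/3}` satisfies `f(a) ≤ 8·K^{−3}·(b^{2/3} − a^{2/3})^{−3}`. -/
theorem stmt_6 (a b K : ℝ) (ha : 0 < a) (hab : a < b) (hK : 0 < K) (f f' : ℝ → ℝ)
    (hderiv : ∀ s ∈ Set.Icc a b, HasDerivWithinAt f (f' s) (Set.Icc a b) s)
    (hpos : ∀ s ∈ Set.Icc a b, 0 < f s)
    (hineq : ∀ s ∈ Set.Icc a b, K * s ^ (-(1 : ℝ) / 3) * f s ^ ((4 : ℝ) / 3) ≤ f' s) :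
    f a ≤ 8 * K ^ (-(3 : ℝ)) * (b ^ ((2 : ℝ) / 3) - a ^ ((2 : ℝ) / 3)) ^ (-(3 : ℝ)) := by
  set D := b ^ ((2 : ℝ) / 3) - a ^ ((2 : ℝ) / 3)
  have hD : 0 < D := sub_pos.2 (Real.rpow_lt_rpow ha.le hab (by norm_num))
  have hH : ∀ s ∈ Icc a b, HasDerivWithinAt (fun s => 3 * K / 2 * s ^ ((2 : ℝ) / 3))
      (K * s ^ (-(1 : ℝ) / 3)) (Icc a b) s := by
    intro s hs
    refine ((Real.hasDerivAt_rpow_const (Or.inl (ha.trans_le hs.1).ne')).const_mul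
      (3 * K / 2)).hasDerivWithinAt.congr_deriv ?_
    rw [show (2 : ℝ) / 3 - 1 = -1 / 3 by norm_num]
    ring
  have key := mul_sub_le_rpow_neg_sub_of_mul_rpow_le_deriv hab.le (by norm_num : (0 : ℝ) < 1 / 3)
    hderiv hH hpos (fun s hs => by convert hineq s hs using 3; norm_num)
  have hfb : 0 < f b ^ (-(1 / 3) : ℝ) := Real.rpow_pos_of_pos (hpos b (right_mem_Icc.2 hab.le)) _
  have hbound : K / 2 * D ≤ f a ^ (-(1 : ℝ) / 3) := by
    rw [neg_div]; linarith
  calc f a ≤ (K / 2 * D) ^ (-(1 : ℝ) / 3)⁻¹ :=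
        (Real.le_rpow_inv_iff_of_neg (hpos a (left_mem_Icc.2 hab.le)) (by positivity)
          (by norm_num)).2 hbound
    _ = 8 * K ^ (-(3 : ℝ)) * D ^ (-(3 : ℝ)) := by
        rw [show (-(1 : ℝ) / 3)⁻¹ = -3 by norm_num, Real.mul_rpow (by positivity) hD.le,
          Real.div_rpow hK.le zero_le_two, show (2 : ℝ) ^ (-(3 : ℝ)) = 1 / 8 by norm_num]
        ring
end

section
/- Let T > 0 and c > 0, and let F be a differentiable real-valued function on (0, T] such that F'(t) ≥ c·(max(−F(t), 0))^{4/3} for all t ∈ (0, T]. Then F(t) ≥ −27·c^{−3}·t^{−3} for every t ∈ (0, T]. -/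
/-- If `F` is differentiable on `(0,T]` with
`F'(t) ≥ c·(max(−F(t),0))^{4/3}`, then `F(t) ≥ −27·c^{−3}·t^{−3}` on `(0,T]`. -/
theorem stmt_7 (T c : ℝ) (hT : 0 < T) (hc : 0 < c) (F F' : ℝ → ℝ)
    (hderiv : ∀ t ∈ Set.Ioc 0 T, HasDerivWithinAt F (F' t) (Set.Ioc 0 T) t)
    (hineq : ∀ t ∈ Set.Ioc 0 T, c * max (-F t) 0 ^ ((4 : ℝ) / 3) ≤ F' t) :
    ∀ t ∈ Set.Ioc 0 T, -27 * c ^ (-(3 : ℝ)) * t ^ (-(3 : ℝ)) ≤ F t := by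
  intro t₀ ht₀
  by_contra hcon
  push_neg at hcon
  obtain ⟨ht₀0, ht₀T⟩ := ht₀
  -- F' is nonnegative on (0,T]
  have hF'nonneg : ∀ s ∈ Set.Ioc (0:ℝ) T, 0 ≤ F' s := fun s hs =>
    le_trans (mul_nonneg hc.le (Real.rpow_nonneg (le_max_right _ _) _)) (hineq s hs)
  -- F is monotone on (0,T]
  have hmono : MonotoneOn F (Set.Ioc 0 T) := by
    apply monotoneOn_of_hasDerivWithinAt_nonneg (convex_Ioc 0 T)
      (f' := F') (fun s hs => (hderiv s hs).continuousWithinAt)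
    · intro x hx
      rw [interior_Ioc] at hx ⊢
      exact (hderiv x (Set.Ioo_subset_Ioc_self hx)).mono Set.Ioo_subset_Ioc_self
    · intro x hx
      rw [interior_Ioc] at hx
      exact hF'nonneg x (Set.Ioo_subset_Ioc_self hx)
  have hBpos : (0:ℝ) < 27 * c ^ (-(3 : ℝ)) * t₀ ^ (-(3 : ℝ)) := by positivity
  have hFt₀neg : F t₀ < 0 := by linarith
  -- on (0, t₀], F s ≤ F t₀ < 0
  have hFneg : ∀ s ∈ Set.Ioc (0:ℝ) t₀, F s < 0 := by
    intro s hs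
    have hsT : s ∈ Set.Ioc (0:ℝ) T := ⟨hs.1, hs.2.trans ht₀T⟩
    exact lt_of_le_of_lt (hmono hsT ⟨ht₀0, ht₀T⟩ hs.2) hFt₀neg
  -- auxiliary function g
  set g : ℝ → ℝ := fun s => (-F s) ^ (-(1:ℝ)/3) - c/3 * s with hg_def
  have hsubset : Set.Ioc (0:ℝ) t₀ ⊆ Set.Ioc (0:ℝ) T := fun x hx => ⟨hx.1, hx.2.trans ht₀T⟩
  have hgmono : MonotoneOn g (Set.Ioc 0 t₀) := by
    apply monotoneOn_of_hasDerivWithinAt_nonneg (convex_Ioc 0 t₀)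
      (f' := fun s => (-F' s) * (-(1:ℝ)/3) * (-F s) ^ (-(1:ℝ)/3 - 1) - c/3)
    · -- continuity
      apply ContinuousOn.sub
      · apply ContinuousOn.rpow_const
        · exact fun s hs => (((hderiv s (hsubset hs)).mono hsubset).continuousWithinAt).neg
        · intro s hs
          exact Or.inl (ne_of_gt (neg_pos.2 (hFneg s hs)))
      · exact (continuousOn_const.mul continuousOn_id)
    · intro x hx
      rw [interior_Ioc] at hx ⊢
      have hxS : x ∈ Set.Ioc (0:ℝ) t₀ := Set.Ioo_subset_Ioc_self hx
      have hF : HasDerivWithinAt F (F' x) (Set.Ioo 0 t₀) x :=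
        (hderiv x (hsubset hxS)).mono (Set.Ioo_subset_Ioc_self.trans hsubset)
      have hne : -F x ≠ 0 := ne_of_gt (neg_pos.2 (hFneg x hxS))
      have hid : HasDerivWithinAt (fun s : ℝ => c/3 * s) (c/3) (Set.Ioo 0 t₀) x := by
        simpa using (hasDerivWithinAt_id x (Set.Ioo (0:ℝ) t₀)).const_mul (c/3)
      exact (hF.neg.rpow_const (Or.inl hne)).sub hid
    · intro x hx
      rw [interior_Ioc] at hx
      have hxS : x ∈ Set.Ioc (0:ℝ) t₀ := Set.Ioo_subset_Ioc_self hx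
      have ha : (0:ℝ) < -F x := by have := hFneg x hxS; linarith
      have hmax : max (-F x) 0 = -F x := max_eq_left ha.le
      have h1 : c * (-F x) ^ ((4:ℝ)/3) ≤ F' x := by
        have := hineq x (hsubset hxS); rwa [hmax] at this
      have h2 : (-F x) ^ ((4:ℝ)/3) * (-F x) ^ (-(1:ℝ)/3 - 1) = 1 := by
        rw [← Real.rpow_add ha]
        norm_num
      have h3 : (0:ℝ) ≤ (-F x) ^ (-(1:ℝ)/3 - 1) := Real.rpow_nonneg ha.le _
      have h4 : c * ((-F x) ^ ((4:ℝ)/3) * (-F x) ^ (-(1:ℝ)/3 - 1))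
          ≤ F' x * (-F x) ^ (-(1:ℝ)/3 - 1) := by
        rw [← mul_assoc]; exact mul_le_mul_of_nonneg_right h1 h3
      rw [h2, mul_one] at h4
      nlinarith
  -- g s ≤ g t₀ for s ∈ (0, t₀]
  have hkey : ∀ s ∈ Set.Ioc (0:ℝ) t₀, c/3 * t₀ ≤ (-F t₀) ^ (-(1:ℝ)/3) + c/3 * s := by
    intro s hs
    have := hgmono hs (Set.right_mem_Ioc.2 ht₀0) hs.2
    have hpos : (0:ℝ) < (-F s) ^ (-(1:ℝ)/3) :=
      Real.rpow_pos_of_pos (neg_pos.2 (hFneg s hs)) _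
    simp only [hg_def] at this
    linarith
  -- take s → 0
  have hlim : c/3 * t₀ ≤ (-F t₀) ^ (-(1:ℝ)/3) := by
    apply le_of_forall_pos_le_add
    intro ε hε
    have hs : min t₀ (3*ε/c) ∈ Set.Ioc (0:ℝ) t₀ :=
      ⟨lt_min ht₀0 (by positivity), min_le_left _ _⟩
    have h1 := hkey _ hs
    have h2 : c/3 * min t₀ (3*ε/c) ≤ ε := by
      have := min_le_right t₀ (3*ε/c)
      calc c/3 * min t₀ (3*ε/c) ≤ c/3 * (3*ε/c) := by
            apply mul_le_mul_of_nonneg_left this (by positivity)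
        _ = ε := by field_simp
    linarith
  -- cube both sides
  set v : ℝ := -F t₀ with hv_def
  have hvpos : (0:ℝ) < v := by simp [hv_def]; linarith
  have hcube : (c/3 * t₀)^(3:ℕ) ≤ ((-F t₀) ^ (-(1:ℝ)/3))^(3:ℕ) :=
    pow_le_pow_left₀ (by positivity) hlim 3
  have heq : ((-F t₀) ^ (-(1:ℝ)/3))^(3:ℕ) = v⁻¹ := by
    rw [← Real.rpow_natCast ((-F t₀) ^ (-(1:ℝ)/3)) 3, ← Real.rpow_mul hvpos.le]
    norm_num [Real.rpow_neg_one]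
  rw [heq] at hcube
  have hA : (0:ℝ) < (c/3 * t₀)^(3:ℕ) := by positivity
  have hvle : v ≤ ((c/3 * t₀)^(3:ℕ))⁻¹ := by
    rw [← inv_inv v]
    exact inv_anti₀ hA hcube
  have hB : ((c/3 * t₀)^(3:ℕ))⁻¹ = 27 * c ^ (-(3:ℝ)) * t₀ ^ (-(3:ℝ)) := by
    rw [Real.rpow_neg hc.le, Real.rpow_neg ht₀0.le,
      show ((3:ℝ)) = ((3:ℕ):ℝ) by norm_num, Real.rpow_natCast, Real.rpow_natCast]
    field_simp
    ring
  rw [hB] at hvle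
  have : 27 * c ^ (-(3:ℝ)) * t₀ ^ (-(3:ℝ)) < v := by simp [hv_def]; linarith
  linarith
end

section
/- Let C ≥ 0 and T ∈ (0, 1] satisfy 1/(2·√T) > 2 + C·T. Let N be a differentiable real-valued function on (0, T] with N'(x) ≤ (N(x) + 2·N(x)²)/x + C·x for all x ∈ (0, T]. If t̂ ∈ (0, T] and N(t̂) ≤ −√t̂, then N(x) ≤ −√x for every x ∈ [t̂, T]. -/
/-- Barrier argument: if `N' ≤ (N + 2N²)/x + C·x` on `(0,T]`, `T ≤ 1`,
`1/(2√T) > 2 + C·T`, and `N(tc) ≤ −√tc` for some `tc ∈ (0,T]`,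
then `N(x) ≤ −√x` for all `x ∈ [tc,T]`. -/
theorem stmt_14 (C T : ℝ) (hC : 0 ≤ C) (hT : 0 < T) (hT1 : T ≤ 1)
    (hbar : 2 + C * T < 1 / (2 * Real.sqrt T)) (N N' : ℝ → ℝ)
    (hderiv : ∀ x ∈ Set.Ioc 0 T, HasDerivWithinAt N (N' x) (Set.Ioc 0 T) x)
    (hineq : ∀ x ∈ Set.Ioc 0 T, N' x ≤ (N x + 2 * N x ^ 2) / x + C * x)
    (tc : ℝ) (htc : tc ∈ Set.Ioc 0 T) (hN : N tc ≤ -Real.sqrt tc) :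
    ∀ x ∈ Set.Icc tc T, N x ≤ -Real.sqrt x := by
  obtain ⟨htc0, htcT⟩ := htc
  set h : ℝ → ℝ := fun x => N x + Real.sqrt x with hh
  have hhd : ∀ x ∈ Set.Ioc 0 T,
      HasDerivWithinAt h (N' x + 1 / (2 * Real.sqrt x)) (Set.Ioc 0 T) x := fun x hx =>
    (hderiv x hx).add ((Real.hasDerivAt_sqrt (ne_of_gt hx.1)).hasDerivWithinAt)
  have hcont : ContinuousOn h (Set.Ioc 0 T) := fun x hx => (hhd x hx).continuousWithinAt
  intro x₀ hx₀
  by_contra hcon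
  push_neg at hcon
  have hx₀T : x₀ ∈ Set.Ioc 0 T := ⟨lt_of_lt_of_le htc0 hx₀.1, hx₀.2⟩
  have hhx₀ : 0 < h x₀ := by simp only [hh]; linarith
  -- the last zero-crossing point
  set S : Set ℝ := Set.Icc tc x₀ ∩ h ⁻¹' Set.Iic 0 with hS
  have hsubIoc : Set.Icc tc x₀ ⊆ Set.Ioc 0 T := fun y hy =>
    ⟨lt_of_lt_of_le htc0 hy.1, le_trans hy.2 hx₀.2⟩
  have hScl : IsClosed S :=
    (hcont.mono hsubIoc).preimage_isClosed_of_isClosed isClosed_Icc isClosed_Iic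
  have hScpt : IsCompact S := (isCompact_Icc).of_isClosed_subset hScl Set.inter_subset_left
  have hSne : S.Nonempty := ⟨tc, ⟨le_refl tc, hx₀.1⟩, by
    simp only [Set.mem_preimage, Set.mem_Iic, hh]; linarith⟩
  obtain ⟨hsIcc, hsle⟩ := hScpt.sSup_mem hSne
  set s := sSup S with hsdef
  have hsIoc : s ∈ Set.Ioc 0 T := hsubIoc hsIcc
  have hsx₀ : s < x₀ := by
    rcases lt_or_eq_of_le hsIcc.2 with hlt | heq
    · exact hlt
    · exfalso; rw [heq] at hsle; simp only [Set.mem_preimage, Set.mem_Iic] at hsle; linarith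
  have hpos : ∀ y ∈ Set.Ioc s x₀, 0 < h y := by
    intro y hy
    by_contra hyle
    push_neg at hyle
    have hyS : y ∈ S := ⟨⟨le_trans hsIcc.1 hy.1.le, hy.2⟩, hyle⟩
    exact absurd (le_csSup hScpt.bddAbove hyS) (not_le.mpr hy.1)
  have hnb : (nhdsWithin s (Set.Ioc s x₀)).NeBot := by
    apply mem_closure_iff_nhdsWithin_neBot.mp
    rw [closure_Ioc (ne_of_lt hsx₀)]
    exact Set.left_mem_Icc.mpr hsx₀.le
  -- h s = 0
  have hIocsub : Set.Ioc s x₀ ⊆ Set.Ioc 0 T := fun y hy =>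
    ⟨lt_trans hsIoc.1 hy.1, le_trans hy.2 hx₀.2⟩
  have hsge : 0 ≤ h s := by
    have htend : Filter.Tendsto h (nhdsWithin s (Set.Ioc s x₀)) (nhds (h s)) :=
      ((hcont s hsIoc).mono hIocsub).tendsto
    refine ge_of_tendsto htend ?_
    filter_upwards [self_mem_nhdsWithin] with y hy using (hpos y hy).le
  have hs0 : h s = 0 := le_antisymm (by simpa using hsle) hsge
  have hNs : N s = -Real.sqrt s := by
    have : N s + Real.sqrt s = 0 := hs0
    linarith
  -- derivative at s within Icc s x₀
  set d := N' s + 1 / (2 * Real.sqrt s) with hd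
  have hds : HasDerivWithinAt h d (Set.Icc s x₀) s :=
    (hhd s hsIoc).mono (fun y hy => hsubIoc ⟨le_trans hsIcc.1 hy.1, hy.2⟩)
  have hdnn : 0 ≤ d := by
    have hslope := hasDerivWithinAt_iff_tendsto_slope.mp hds
    have hnb2 : (nhdsWithin s (Set.Icc s x₀ \ {s})).NeBot :=
      hnb.mono (nhdsWithin_mono s (fun y hy =>
        ⟨⟨hy.1.le, hy.2⟩, ne_of_gt hy.1⟩))
    refine ge_of_tendsto hslope ?_
    filter_upwards [self_mem_nhdsWithin] with y hy
    have hys : s < y := lt_of_le_of_ne hy.1.1 (Ne.symm hy.2)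
    have hhy : 0 < h y := hpos y ⟨hys, hy.1.2⟩
    have hsl : slope h s y = h y / (y - s) := by
      rw [slope_def_field, hs0, sub_zero]
    rw [hsl]
    exact (div_pos hhy (by linarith)).le
  -- contradiction via the differential inequality
  have hineqs := hineq s hsIoc
  set u := Real.sqrt s with hu
  set v := Real.sqrt T with hv
  have hu0 : 0 < u := Real.sqrt_pos.mpr hsIoc.1
  have hv0 : 0 < v := Real.sqrt_pos.mpr hT
  have hu2 : u ^ 2 = s := Real.sq_sqrt hsIoc.1.le
  have hv2 : v ^ 2 = T := Real.sq_sqrt hT.le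
  have huv : u ≤ v := Real.sqrt_le_sqrt hsIoc.2
  rw [hNs] at hineqs
  have e1 : (-u + 2 * (-u) ^ 2) / s = -1 / u + 2 := by
    rw [← hu2]; field_simp
  rw [e1] at hineqs
  have hdnn' : 0 ≤ N' s + 1 / (2 * u) := hdnn
  have h1 : 1 / (2 * v) ≤ 1 / (2 * u) :=
    one_div_le_one_div_of_le (by linarith) (by linarith)
  have hCs : C * s ≤ C * T := mul_le_mul_of_nonneg_left hsIoc.2 hC
  have e2 : (1 : ℝ) / (2 * u) = 1 / u / 2 := by ring
  have e3 : (-1 : ℝ) / u = -(1 / u) := by ring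
  linarith [hdnn', hineqs, h1, hbar, hCs, e2, e3]
end

section
/- There exists a constant κ > 0 such that for all nonnegative real numbers λ₁, λ₂, λ₃, writing s = λ₁ + λ₂ + λ₃, one has s ≤ 3·(λ₁·λ₂·λ₃)^{1/3} + κ·((λ₁ − s/3)² + (λ₂ − s/3)² + (λ₃ − s/3)²)^{1/2}. -/
/-- Quantitative AM–GM stability: there is a constant `κ > 0` such that
for all nonnegative `λ₁, λ₂, λ₃` with `s = λ₁ + λ₂ + λ₃`,
`s ≤ 3·(λ₁λ₂λ₃)^{1/3} + κ·((λ₁−s/3)² + (λ₂−s/3)² + (λ₃−s/3)²)^{1/2}`. -/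
theorem stmt_15 : ∃ κ : ℝ, 0 < κ ∧ ∀ l₁ l₂ l₃ : ℝ, 0 ≤ l₁ → 0 ≤ l₂ → 0 ≤ l₃ →
    l₁ + l₂ + l₃ ≤ 3 * (l₁ * l₂ * l₃) ^ ((1 : ℝ) / 3) +
      κ * Real.sqrt ((l₁ - (l₁ + l₂ + l₃) / 3) ^ 2 + (l₂ - (l₁ + l₂ + l₃) / 3) ^ 2 +
        (l₃ - (l₁ + l₂ + l₃) / 3) ^ 2) := by
  refine ⟨3, by norm_num, ?_⟩
  intro l₁ l₂ l₃ h1 h2 h3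
  set s : ℝ := l₁ + l₂ + l₃ with hs
  set m : ℝ := min l₁ (min l₂ l₃) with hmdef
  have hm0 : 0 ≤ m := le_min h1 (le_min h2 h3)
  have hm1 : m ≤ l₁ := min_le_left _ _
  have hm2 : m ≤ l₂ := le_trans (min_le_right _ _) (min_le_left _ _)
  have hm3 : m ≤ l₃ := le_trans (min_le_right _ _) (min_le_right _ _)
  set D : ℝ := (l₁ - s / 3) ^ 2 + (l₂ - s / 3) ^ 2 + (l₃ - s / 3) ^ 2 with hD
  -- m ≤ geometric mean
  have hcube : m ^ (3 : ℕ) ≤ l₁ * l₂ * l₃ := by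
    calc m ^ (3 : ℕ) = m * m * m := by ring
      _ ≤ l₁ * l₂ * l₃ :=
        mul_le_mul (mul_le_mul hm1 hm2 hm0 h1) hm3 hm0 (by positivity)
  have hG : m ≤ (l₁ * l₂ * l₃) ^ ((1 : ℝ) / 3) := by
    have h1' : m = ((m ^ (3 : ℕ) : ℝ)) ^ ((1 : ℝ) / 3) := by
      rw [← Real.rpow_natCast m 3, ← Real.rpow_mul hm0]
      norm_num
    rw [h1']
    exact Real.rpow_le_rpow (by positivity) hcube (by norm_num)
  -- (m - s/3)² ≤ D
  have hm : m = l₁ ∨ m = l₂ ∨ m = l₃ := by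
    rcases le_total l₁ (min l₂ l₃) with h | h
    · exact Or.inl (min_eq_left h)
    · rcases le_total l₂ l₃ with h' | h'
      · exact Or.inr (Or.inl (by rw [hmdef, min_eq_right h, min_eq_left h']))
      · exact Or.inr (Or.inr (by rw [hmdef, min_eq_right h, min_eq_right h']))
  have hsq : (m - s / 3) ^ 2 ≤ D := by
    rcases hm with h | h | h <;> rw [h] <;>
      nlinarith [sq_nonneg (l₁ - s / 3), sq_nonneg (l₂ - s / 3), sq_nonneg (l₃ - s / 3)]
  have hd : s / 3 - m ≤ Real.sqrt D := by
    have h1' : s / 3 - m ≤ |m - s / 3| := by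
      rw [abs_sub_comm]; exact le_abs_self _
    have h2' : |m - s / 3| = Real.sqrt ((m - s / 3) ^ 2) := (Real.sqrt_sq_eq_abs _).symm
    calc s / 3 - m ≤ Real.sqrt ((m - s / 3) ^ 2) := h2' ▸ h1'
      _ ≤ Real.sqrt D := Real.sqrt_le_sqrt hsq
  linarith
end
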